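/- In a DAG, for the mutilated graph obtained by removing all edges into a vertex set W, the ancestor relation restricted to vertices outside the descendants of W is unchanged: if v, u ∉ De(W) in G, then v is an ancestor of u in G iff v is an ancestor of u in G with incoming edges to W removed. -/

import Mathlib

/-! Every path into a set that is closed under predecessors stays inside that set. The
complement of `De` is such a set, and it is disjoint from `W`, so a path of `G` ending
outside `De` never enters `W`, i.e. it uses no edge of `G` that the mutilation removes. -/

theorem Relation.ReflTransGen.restrict_of_predClosed {α : Type*} {r : α → α → Prop}
    {S : Set α} (hS : ∀ a b, r a b → b ∈ S → a ∈ S) {a b : α}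
    (h : Relation.ReflTransGen r a b) (hb : b ∈ S) :
    Relation.ReflTransGen (fun x y => r x y ∧ y ∈ S) a b := by
  induction h with
  | refl => exact .refl
  | tail _ hcb ih => exact (ih (hS _ _ hcb hb)).tail ⟨hcb, hb⟩

theorem mutilation_preserves_ancestry_outside_descendants_general {V : Type*}
    (E : V → V → Prop) (W : Set V)
    (De : Set V) (hDe : De = {x | ∃ w ∈ W, Relation.ReflTransGen E w x})
    (v u : V) (hu : u ∉ De) :
    Relation.ReflTransGen E v u ↔
      Relation.ReflTransGen (fun a b => E a b ∧ b ∉ W) v u := by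
  refine ⟨fun h => ?_, fun h => Relation.ReflTransGen.mono (p := E) (fun _ _ hab => hab.1) _ _ h⟩
  have hPredClosed : ∀ a b, E a b → b ∈ Deᶜ → a ∈ Deᶜ := by
    subst hDe
    exact fun _ _ hab hb ⟨w, hw, hwa⟩ => hb ⟨w, hw, hwa.tail hab⟩
  have hW : ∀ b ∈ Deᶜ, b ∉ W := by
    subst hDe
    exact fun b hb hbW => hb ⟨b, hbW, .refl⟩
  exact Relation.ReflTransGen.mono (fun _ b hab => ⟨hab.1, hW b hab.2⟩) _ _
    (h.restrict_of_predClosed hPredClosed hu)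

/-- In a DAG, removing all edges into a vertex set W leaves the
ancestor relation unchanged on vertices outside the descendants of W: if
v, u ∉ De(W), then v is an ancestor of u in G iff v is an ancestor of u in the
mutilated graph. -/
theorem mutilation_preserves_ancestry_outside_descendants {V : Type*}
    (E : V → V → Prop) (hacyc : ∀ v, ¬ Relation.TransGen E v v) (W : Set V)
    (De : Set V) (hDe : De = {x | ∃ w ∈ W, Relation.ReflTransGen E w x})
    (v u : V) (hv : v ∉ De) (hu : u ∉ De) :
    Relation.ReflTransGen E v u ↔
      Relation.ReflTransGen (fun a b => E a b ∧ b ∉ W) v u :=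
  mutilation_preserves_ancestry_outside_descendants_general E W De hDe v u hu
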